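/- arXiv:1408.1000 — 6 statements merged into one kernel-verified Lean document; each statement's English description precedes it below -/
import Mathlib

section
/- Let p be a probability distribution over an alphabet of k elements. Then: (i) for every α ≥ 0, P_{2α}(p) ≤ P_α(p)²; (ii) for every α > 1 and 0 ≤ β ≤ α, P_{α+β}(p) ≤ k^{(α−1)(α−β)/α} · P_α(p)²; and (iii) for every α > 1 and 0 ≤ β ≤ α, P_{α−β}(p) ≤ k^β · P_α(p). -/
/-!
Writing `p x ^ (α * t) = (p x ^ α) ^ t` turns every bound into one about the power sums of the
weights `p x ^ α`, which sum to `P_α(p)`. For `t ≥ 1` the sum of `t`-th powers is at most the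
`t`-th power of the sum, and for `0 ≤ t ≤ 1` the power-mean inequality costs a factor `k ^ (1 - t)`.
The leftover negative powers of `P_α(p)` are controlled by `P_α(p) ≥ k ^ (1 - α)`, which is
Jensen's inequality for `x ↦ x ^ α` applied to `∑ p x = 1`.
-/

open Real

/-- The power sum of order `α` of a distribution `p` on a finite alphabet. -/
noncomputable def powerSum {X : Type*} [Fintype X] (α : ℝ) (p : X → ℝ) : ℝ :=
  ∑ x, p x ^ α

/-- `p` is a probability distribution on a finite alphabet. -/
def IsDist {X : Type*} [Fintype X] (p : X → ℝ) : Prop :=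
  (∀ x, 0 ≤ p x) ∧ ∑ x, p x = 1

open Finset

namespace Real

variable {ι : Type*} {s : Finset ι} {f : ι → ℝ}

theorem sum_rpow_le_rpow_sum_of_nonneg (hf : ∀ i, 0 ≤ f i) {t : ℝ} (ht : 1 ≤ t) :
    ∑ i ∈ s, f i ^ t ≤ (∑ i ∈ s, f i) ^ t := by
  have ht' : 1 + (t - 1) ≠ 0 := by linarith
  have hS : 0 ≤ ∑ i ∈ s, f i := sum_nonneg fun i _ => hf i
  calc ∑ i ∈ s, f i ^ t = ∑ i ∈ s, f i * f i ^ (t - 1) := by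
        refine sum_congr rfl fun i _ => ?_
        rw [← rpow_one_add' (hf i) ht', add_sub_cancel]
    _ ≤ ∑ i ∈ s, f i * (∑ j ∈ s, f j) ^ (t - 1) := by
        refine sum_le_sum fun i hi => mul_le_mul_of_nonneg_left ?_ (hf i)
        exact rpow_le_rpow (hf i) (single_le_sum (fun j _ => hf j) hi) (by linarith)
    _ = (∑ i ∈ s, f i) ^ t := by
        rw [← sum_mul, ← rpow_one_add' hS ht', add_sub_cancel]

theorem sum_rpow_le_card_rpow_mul_rpow_sum_of_nonneg (hf : ∀ i, 0 ≤ f i) {r : ℝ} (hr₀ : 0 ≤ r)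
    (hr₁ : r ≤ 1) : ∑ i ∈ s, f i ^ r ≤ (#s : ℝ) ^ (1 - r) * (∑ i ∈ s, f i) ^ r := by
  obtain rfl | hr₀ := hr₀.eq_or_lt
  · simp
  -- Hölder with exponent `1 / r` against the constant weight `1`.
  have h := inner_le_weight_mul_Lp_of_nonneg s ((one_le_div hr₀).mpr hr₁) (fun _ => 1)
    (fun i => f i ^ r) (fun _ => zero_le_one) (fun i => rpow_nonneg (hf i) r)
  simp only [one_mul, sum_const, nsmul_eq_mul, mul_one, one_div, inv_inv] at h
  simpa only [← rpow_mul (hf _), mul_inv_cancel₀ hr₀.ne', rpow_one] using h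

end Real

section

variable {X : Type*} [Fintype X] {p : X → ℝ}

theorem powerSum_mul (hp : ∀ x, 0 ≤ p x) (a t : ℝ) :
    powerSum (a * t) p = powerSum t (fun x => p x ^ a) := by
  simp only [powerSum, rpow_mul (hp _)]

theorem powerSum_two_mul_le_sq (hp : ∀ x, 0 ≤ p x) (α : ℝ) :
    powerSum (2 * α) p ≤ powerSum α p ^ 2 := by
  rw [mul_comm, powerSum_mul hp]
  simpa only [powerSum, rpow_two] using
    sum_sq_le_sq_sum_of_nonneg fun x _ => rpow_nonneg (hp x) α

namespace IsDist

theorem card_pos (hp : IsDist p) : 0 < Fintype.card X :=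
  Finset.card_pos.mpr (nonempty_of_sum_ne_zero (hp.2 ▸ one_ne_zero))

theorem card_rpow_le_powerSum (hp : IsDist p) {α : ℝ} (hα : 1 ≤ α) :
    (Fintype.card X : ℝ) ^ (1 - α) ≤ powerSum α p := by
  have hk : (0 : ℝ) < Fintype.card X := by exact_mod_cast hp.card_pos
  have h := rpow_sum_le_const_mul_sum_rpow_of_nonneg (s := univ) hα fun x _ => hp.1 x
  rw [hp.2, one_rpow, card_univ] at h
  rw [show 1 - α = -(α - 1) by ring, rpow_neg hk.le]
  exact (inv_le_iff_one_le_mul₀' (rpow_pos_of_pos hk _)).mpr h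

theorem powerSum_pos (hp : IsDist p) {α : ℝ} (hα : 1 ≤ α) : 0 < powerSum α p :=
  (rpow_pos_of_pos (Nat.cast_pos.mpr hp.card_pos) _).trans_le (hp.card_rpow_le_powerSum hα)

theorem powerSum_rpow_le_card_rpow (hp : IsDist p) {α t : ℝ} (hα : 1 ≤ α) (ht : t ≤ 0) :
    powerSum α p ^ t ≤ (Fintype.card X : ℝ) ^ ((1 - α) * t) := by
  have hk : (0 : ℝ) < Fintype.card X := by exact_mod_cast hp.card_pos
  rw [rpow_mul hk.le]
  exact rpow_le_rpow_of_nonpos (rpow_pos_of_pos hk _) (hp.card_rpow_le_powerSum hα) ht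

theorem powerSum_add_le (hp : IsDist p) {α β : ℝ} (hα : 1 < α) (hβ₀ : 0 ≤ β) (hβ : β ≤ α) :
    powerSum (α + β) p ≤
      (Fintype.card X : ℝ) ^ ((α - 1) * (α - β) / α) * powerSum α p ^ 2 := by
  have hα₀ : 0 < α := one_pos.trans hα
  have hS := hp.powerSum_pos hα.le
  calc powerSum (α + β) p = powerSum ((α + β) / α) (fun x => p x ^ α) := by
        rw [← powerSum_mul hp.1, mul_div_cancel₀ _ hα₀.ne']
    _ ≤ powerSum α p ^ ((α + β) / α) :=
        sum_rpow_le_rpow_sum_of_nonneg (fun x => rpow_nonneg (hp.1 x) α)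
          ((le_div_iff₀ hα₀).mpr (by linarith))
    _ = powerSum α p ^ ((β - α) / α) * powerSum α p ^ 2 := by
        rw [← rpow_two, ← rpow_add hS]
        congr 1
        rw [div_add' _ _ _ hα₀.ne']
        ring
    _ ≤ (Fintype.card X : ℝ) ^ ((α - 1) * (α - β) / α) * powerSum α p ^ 2 := by
        rw [show (α - 1) * (α - β) / α = (1 - α) * ((β - α) / α) by ring]
        gcongr
        exact hp.powerSum_rpow_le_card_rpow hα.le
          (div_nonpos_of_nonpos_of_nonneg (sub_nonpos.mpr hβ) hα₀.le)

theorem powerSum_sub_le (hp : IsDist p) {α β : ℝ} (hα : 1 < α) (hβ₀ : 0 ≤ β) (hβ : β ≤ α) :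
    powerSum (α - β) p ≤ (Fintype.card X : ℝ) ^ β * powerSum α p := by
  have hα₀ : 0 < α := one_pos.trans hα
  have hk : (0 : ℝ) < Fintype.card X := by exact_mod_cast hp.card_pos
  have hS := hp.powerSum_pos hα.le
  set r := (α - β) / α with hr
  have hr₀ : 0 ≤ r := div_nonneg (by linarith) hα₀.le
  have hr₁ : r ≤ 1 := (div_le_one hα₀).mpr (by linarith)
  calc powerSum (α - β) p = powerSum r (fun x => p x ^ α) := by
        rw [← powerSum_mul hp.1, mul_div_cancel₀ _ hα₀.ne']
    _ ≤ (Fintype.card X : ℝ) ^ (1 - r) * powerSum α p ^ r := by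
        simpa only [powerSum, card_univ] using
          sum_rpow_le_card_rpow_mul_rpow_sum_of_nonneg (s := univ)
            (fun x => rpow_nonneg (hp.1 x) α) hr₀ hr₁
    _ = (Fintype.card X : ℝ) ^ (1 - r) * (powerSum α p ^ (r - 1) * powerSum α p) := by
        rw [← rpow_add_one hS.ne', sub_add_cancel]
    _ ≤ (Fintype.card X : ℝ) ^ (1 - r) *
          ((Fintype.card X : ℝ) ^ ((1 - α) * (r - 1)) * powerSum α p) := by
        gcongr
        exact hp.powerSum_rpow_le_card_rpow hα.le (by linarith)
    _ = (Fintype.card X : ℝ) ^ β * powerSum α p := by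
        rw [← mul_assoc, ← rpow_add hk, hr]
        congr 2
        field_simp
        ring

end IsDist

end

theorem powerSum_moment_bounds {X : Type*} [Fintype X] {k : ℕ} (hk : Fintype.card X = k)
    (p : X → ℝ) (hp : IsDist p) :
    (∀ α : ℝ, 0 ≤ α → powerSum (2 * α) p ≤ (powerSum α p) ^ 2) ∧
    (∀ α β : ℝ, 1 < α → 0 ≤ β → β ≤ α →
      powerSum (α + β) p ≤ (k : ℝ) ^ ((α - 1) * (α - β) / α) * (powerSum α p) ^ 2) ∧
    (∀ α β : ℝ, 1 < α → 0 ≤ β → β ≤ α →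
      powerSum (α - β) p ≤ (k : ℝ) ^ β * powerSum α p) := by
  subst hk
  exact ⟨fun α _ => powerSum_two_mul_le_sq hp.1 α,
    fun _ _ hα hβ₀ hβ => hp.powerSum_add_le hα hβ₀ hβ,
    fun _ _ hα hβ₀ hβ => hp.powerSum_sub_le hα hβ₀ hβ⟩
end

section
/- Let X be a Poisson random variable with parameter λ > 0. Then for every positive integer r, the variance of the falling power satisfies Var[X^{\underline{r}}] ≤ λ^r ((λ + r)^r − λ^r). -/
/-!
The Poisson weights satisfy `p(j + m) (j + m)^{\underline m} = λ^m p(j)`, hence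
`E[X^{\underline m} g(X - m)] = λ^m E[g(X)]`. Taking `g = 1` gives `E[X^{\underline r}] = λ^r`;
taking `g(j) = (j + r)^{\underline r}` and expanding it by Chu–Vandermonde gives
`E[(X^{\underline r})^2] = λ^r ∑_b C(r, b) λ^b r^{\underline{r-b}} ≤ λ^r (λ + r)^r`,
because `r^{\underline k} ≤ r^k`.
-/

open Real

/-- The probability mass function of the Poisson distribution with parameter `lam`. -/
noncomputable def poissonPMF (lam : ℝ) (i : ℕ) : ℝ :=
  Real.exp (-lam) * lam ^ i / (Nat.factorial i)

/-- The expectation of `f X` where `X ~ Poisson(lam)`. -/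
noncomputable def poissonE (lam : ℝ) (f : ℕ → ℝ) : ℝ :=
  ∑' i : ℕ, poissonPMF lam i * f i

/-- The variance of `f X` where `X ~ Poisson(lam)`. -/
noncomputable def poissonVar (lam : ℝ) (f : ℕ → ℝ) : ℝ :=
  poissonE lam (fun i => (f i) ^ 2) - (poissonE lam f) ^ 2

open Finset

theorem hasSum_poissonPMF (lam : ℝ) : HasSum (poissonPMF lam) 1 := by
  have h := (NormedSpace.expSeries_div_hasSum_exp lam).mul_left (Real.exp (-lam))
  rw [← Real.exp_eq_exp_ℝ, ← Real.exp_add, neg_add_cancel, Real.exp_zero] at h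
  exact h.congr_fun fun i => by rw [poissonPMF, mul_div_assoc]

theorem poissonPMF_add_mul_descFactorial (lam : ℝ) (m j : ℕ) :
    poissonPMF lam (j + m) * (j + m).descFactorial m = lam ^ m * poissonPMF lam j := by
  have hfac : ((j + m).factorial : ℝ) = j.factorial * (j + m).descFactorial m := by
    have h := Nat.factorial_mul_descFactorial (Nat.le_add_left m j)
    rw [Nat.add_sub_cancel] at h
    exact_mod_cast h.symm
  rw [poissonPMF, poissonPMF, hfac, pow_add]
  field_simp [Nat.factorial_ne_zero]

theorem HasSum.poissonPMF_mul_descFactorial_mul {lam a : ℝ} {g : ℕ → ℝ} (m : ℕ)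
    (h : HasSum (fun j => poissonPMF lam j * g j) a) :
    HasSum (fun i => poissonPMF lam i * i.descFactorial m * g (i - m)) (lam ^ m * a) := by
  have hlow : ∑ i ∈ range m, poissonPMF lam i * i.descFactorial m * g (i - m) = 0 :=
    sum_eq_zero fun i hi => by
      rw [Nat.descFactorial_eq_zero_iff_lt.2 (mem_range.1 hi), Nat.cast_zero, mul_zero, zero_mul]
  rw [← hasSum_nat_add_iff' m, hlow, sub_zero]
  simpa only [poissonPMF_add_mul_descFactorial, Nat.add_sub_cancel, mul_assoc]
    using h.mul_left (lam ^ m)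

theorem hasSum_poissonPMF_mul_descFactorial (lam : ℝ) (m : ℕ) :
    HasSum (fun i => poissonPMF lam i * i.descFactorial m) (lam ^ m) := by
  simpa using (hasSum_poissonPMF lam).mul_right 1 |>.poissonPMF_mul_descFactorial_mul m

theorem Nat.add_descFactorial_eq_sum_antidiagonal (a b k : ℕ) :
    (a + b).descFactorial k =
      ∑ p ∈ antidiagonal k, k.choose p.1 * (a.descFactorial p.1 * b.descFactorial p.2) := by
  have h := Ring.descPochhammer_smeval_add (R := ℤ) (r := a) (s := b) k (Commute.all _ _)
  simp only [← Nat.cast_add, Polynomial.descPochhammer_smeval_eq_descFactorial] at h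
  exact_mod_cast h

theorem hasSum_poissonPMF_mul_add_descFactorial (lam : ℝ) (n k : ℕ) :
    HasSum (fun j => poissonPMF lam j * (j + n).descFactorial k)
      (∑ p ∈ antidiagonal k, k.choose p.1 * (lam ^ p.1 * n.descFactorial p.2)) := by
  simp_rw [Nat.add_descFactorial_eq_sum_antidiagonal, Nat.cast_sum, mul_sum]
  refine hasSum_sum fun p _ => ?_
  have h := (hasSum_poissonPMF_mul_descFactorial lam p.1).mul_left
    ((k.choose p.1 * n.descFactorial p.2 : ℕ) : ℝ)
  rw [show ((k.choose p.1 * n.descFactorial p.2 : ℕ) : ℝ) * lam ^ p.1 =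
      k.choose p.1 * (lam ^ p.1 * n.descFactorial p.2) by push_cast; ring] at h
  exact h.congr_fun fun j => by push_cast; ring

theorem sum_antidiagonal_choose_mul_pow_mul_descFactorial_le {lam : ℝ} (hlam : 0 ≤ lam)
    (n k : ℕ) :
    ∑ p ∈ antidiagonal k, (k.choose p.1 : ℝ) * (lam ^ p.1 * n.descFactorial p.2) ≤
      (lam + n) ^ k := by
  rw [(Commute.all lam n).add_pow']
  refine sum_le_sum fun p _ => ?_
  rw [nsmul_eq_mul]
  gcongr
  exact_mod_cast Nat.descFactorial_le_pow n p.2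

theorem hasSum_poissonPMF_mul_descFactorial_sq (lam : ℝ) (r : ℕ) :
    HasSum (fun i => poissonPMF lam i * (i.descFactorial r : ℝ) ^ 2)
      (lam ^ r * ∑ p ∈ antidiagonal r, r.choose p.1 * (lam ^ p.1 * r.descFactorial p.2)) := by
  convert (hasSum_poissonPMF_mul_add_descFactorial lam r r).poissonPMF_mul_descFactorial_mul r
    using 2 with i
  rcases lt_or_ge i r with hi | hi
  · simp [Nat.descFactorial_eq_zero_iff_lt.2 hi]
  · rw [Nat.sub_add_cancel hi, sq, mul_assoc]

theorem poisson_descFactorial_variance_general (lam : ℝ) (hlam : 0 < lam)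
    (r : ℕ) :
    poissonVar lam (fun i => (Nat.descFactorial i r : ℝ)) ≤
      lam ^ r * ((lam + r) ^ r - lam ^ r) := by
  rw [poissonVar, poissonE, poissonE, (hasSum_poissonPMF_mul_descFactorial_sq lam r).tsum_eq,
    (hasSum_poissonPMF_mul_descFactorial lam r).tsum_eq, sq, ← mul_sub]
  gcongr
  exact sum_antidiagonal_choose_mul_pow_mul_descFactorial_le hlam.le r r

theorem poisson_descFactorial_variance (lam : ℝ) (hlam : 0 < lam)
    (r : ℕ) (hr : 0 < r) :
    poissonVar lam (fun i => (Nat.descFactorial i r : ℝ)) ≤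
      lam ^ r * ((lam + r) ^ r - lam ^ r) :=
  poisson_descFactorial_variance_general lam hlam r
end

section
/- Let p be a probability distribution over an alphabet of k elements, let n > 0, and let (N_x)_x be independent with N_x ~ Poisson(n p_x). Then for every integer α > 1, the variance of the bias-corrected estimator satisfies Var( Σ_x N_x^{\underline{α}} / n^α ) ≤ (1/n^{2α}) Σ_{r=0}^{α−1} n^{α+r} · C(α, r) · α^{α−r} · P_{α+r}(p), and consequently Var( Σ_x N_x^{\underline{α}} / n^α ) / P_α(p)² ≤ Σ_{r=0}^{α−1} ( α² k^{(α−1)/α} / n )^{α−r}. -/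
/-!
Write `(m)_a` for the falling factorial. For `N ~ Poisson(λ)`,
`P(N = j + a) (j + a)_a = λ^a P(N = j)`, hence `E[(N)_a g(N)] = λ^a E[g(N + a)]` for every `g`.
With `g = 1` this gives `E[(N)_a] = λ^a`; with `g = (·)_a` and the Chu–Vandermonde expansion of
`(N + a)_a` it gives `Var[(N)_a] = Σ_{k<a} C(a,k) (a)_{a-k} λ^{a+k}`. The variance of the estimator
is the sum of these over the independent coordinates, and `(a)_{a-k} ≤ a^{a-k}` gives the first bound.

For the second, put `t = P_a(p)^{1/a}`. Every `p_x ≤ t`, so `P_{a+r} ≤ t^r P_a = t^{a+r}`, while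
Jensen's `P_a ≥ k^{1-a}` gives `t⁻¹ ≤ k^{(a-1)/a}`. Hence `P_{a+r} / P_a² ≤ k^{(a-1)(a-r)/a}`, and
`C(a,r) ≤ a^{a-r}` finishes the bound term by term.
-/

open MeasureTheory ProbabilityTheory Real

open Finset
open scoped NNReal Nat

theorem Nat.cast_add_descFactorial_self_eq_sum {R : Type*} [Ring R] (j a : ℕ) :
    ((j + a).descFactorial a : R) =
      ∑ k ∈ range (a + 1), (a.choose k : R) * (j.descFactorial k * a.descFactorial (a - k)) := by
  rw [← Polynomial.descPochhammer_smeval_eq_descFactorial, Nat.cast_add,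
    Ring.descPochhammer_smeval_add _ (Nat.commute_cast (j : R) a),
    Nat.sum_antidiagonal_eq_sum_range_succ_mk]
  simp only [Polynomial.descPochhammer_smeval_eq_descFactorial]

theorem Nat.descFactorial_eq_zero_of_notMem_range_add {a i : ℕ} (hi : i ∉ Set.range (· + a)) :
    i.descFactorial a = 0 :=
  Nat.descFactorial_eq_zero_iff_lt.2 <| by
    by_contra h
    exact hi ⟨i - a, Nat.sub_add_cancel (not_lt.1 h)⟩

namespace ProbabilityTheory

variable {r : ℝ≥0}

lemma poissonMeasure_real_singleton_add_mul_descFactorial (a j : ℕ) :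
    Po(r).real {j + a} * (j + a).descFactorial a = r ^ a * Po(r).real {j} := by
  have hfac := Nat.factorial_mul_descFactorial (Nat.le_add_left a j)
  have hdesc : ((j + a).descFactorial a : ℝ) ≠ 0 := by
    exact_mod_cast (Nat.descFactorial_pos.2 (Nat.le_add_left a j)).ne'
  rw [Nat.add_sub_cancel] at hfac
  rw [poissonMeasure_real_singleton, poissonMeasure_real_singleton, ← hfac]
  push_cast
  field_simp
  ring

-- Both integrals are `tsum`s, and reindexing a `tsum` along an injection needs no summability.
theorem integral_descFactorial_mul_poissonMeasure (a : ℕ) (g : ℕ → ℝ) :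
    ∫ i, (i.descFactorial a : ℝ) * g i ∂Po(r) = r ^ a * ∫ j, g (j + a) ∂Po(r) := by
  simp only [integral_poissonMeasure, smul_eq_mul, ← poissonMeasure_real_singleton]
  rw [← tsum_mul_left, ← (add_left_injective a).tsum_eq]
  · congr with j
    rw [← mul_assoc, poissonMeasure_real_singleton_add_mul_descFactorial, mul_assoc]
  · intro i hi
    by_contra h
    simp [Nat.descFactorial_eq_zero_of_notMem_range_add h] at hi

theorem integrable_descFactorial_mul_poissonMeasure (a : ℕ) {g : ℕ → ℝ}
    (hg : Integrable (fun j => g (j + a)) Po(r)) :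
    Integrable (fun i => (i.descFactorial a : ℝ) * g i) Po(r) := by
  simp only [integrable_poissonMeasure_iff, ← poissonMeasure_real_singleton] at hg ⊢
  rw [← (add_left_injective a).summable_iff]
  · refine (hg.mul_left (r ^ a : ℝ)).congr fun j => ?_
    rw [Function.comp_apply, norm_mul, Real.norm_natCast, ← mul_assoc (Po(r).real _),
      poissonMeasure_real_singleton_add_mul_descFactorial, mul_assoc]
  · intro i hi
    simp [Nat.descFactorial_eq_zero_of_notMem_range_add hi]

theorem integrable_descFactorial_poissonMeasure (a : ℕ) :
    Integrable (fun i => (i.descFactorial a : ℝ)) Po(r) := by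
  simpa using integrable_descFactorial_mul_poissonMeasure a (g := fun _ => (1 : ℝ))
    (integrable_const 1)

theorem integral_descFactorial_poissonMeasure (a : ℕ) :
    ∫ i, (i.descFactorial a : ℝ) ∂Po(r) = r ^ a := by
  simpa using integral_descFactorial_mul_poissonMeasure a (fun _ => (1 : ℝ))

lemma integrable_add_descFactorial_self_poissonMeasure (a : ℕ) :
    Integrable (fun j => ((j + a).descFactorial a : ℝ)) Po(r) := by
  simp_rw [Nat.cast_add_descFactorial_self_eq_sum]
  exact integrable_finsetSum _ fun k _ =>
    ((integrable_descFactorial_poissonMeasure k).mul_const _).const_mul _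

lemma integral_add_descFactorial_self_poissonMeasure (a : ℕ) :
    ∫ j, ((j + a).descFactorial a : ℝ) ∂Po(r) =
      ∑ k ∈ range (a + 1), a.choose k * a.descFactorial (a - k) * (r : ℝ) ^ k := by
  simp_rw [Nat.cast_add_descFactorial_self_eq_sum]
  rw [integral_finsetSum _ fun k _ =>
    ((integrable_descFactorial_poissonMeasure k).mul_const _).const_mul _]
  refine sum_congr rfl fun k _ => ?_
  rw [integral_const_mul, integral_mul_const, integral_descFactorial_poissonMeasure]
  ring

theorem memLp_descFactorial_poissonMeasure (a : ℕ) :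
    MemLp (fun i => (i.descFactorial a : ℝ)) 2 Po(r) := by
  rw [memLp_two_iff_integrable_sq .of_discrete]
  simp_rw [sq]
  exact integrable_descFactorial_mul_poissonMeasure a
    (integrable_add_descFactorial_self_poissonMeasure a)

theorem variance_descFactorial_poissonMeasure (a : ℕ) :
    Var[fun i => (i.descFactorial a : ℝ); Po(r)] =
      ∑ k ∈ range a, a.choose k * a.descFactorial (a - k) * (r : ℝ) ^ (a + k) := by
  rw [variance_eq_sub (memLp_descFactorial_poissonMeasure a),
    integral_descFactorial_poissonMeasure]
  simp only [Pi.pow_apply, sq]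
  rw [integral_descFactorial_mul_poissonMeasure, integral_add_descFactorial_self_poissonMeasure,
    sum_range_succ, mul_add, mul_sum]
  simp [pow_add, mul_left_comm]

end ProbabilityTheory

theorem measurePreserving_poissonMeasure {r : ℝ≥0} {Ω : Type*} [MeasurableSpace Ω]
    {μ : Measure Ω} {N : Ω → ℕ} (hN : Measurable N)
    (hlaw : ∀ i, μ {ω | N ω = i} = ENNReal.ofReal (poissonPMF (r : ℝ) i)) :
    MeasurePreserving N μ Po(r) :=
  ⟨hN, Measure.ext_of_singleton fun i => by
    rw [Measure.map_apply hN (measurableSet_singleton i), poissonMeasure_singleton]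
    exact hlaw i⟩

lemma pow_add_div_sq_pow {n : ℝ} (hn : n ≠ 0) {a r : ℕ} (hr : r ≤ a) :
    n ^ (a + r) / (n ^ a) ^ 2 = (n ^ (a - r))⁻¹ := by
  obtain ⟨m, rfl⟩ := Nat.exists_eq_add_of_le hr
  rw [Nat.add_sub_cancel_left]
  field_simp
  ring

section Estimator

variable {X Ω : Type*} [Fintype X] [MeasurableSpace Ω] {μ : Measure Ω} {N : X → Ω → ℕ}

theorem variance_sum_descFactorial_of_iIndepFun (hmeas : ∀ x, Measurable (N x))
    (hindep : iIndepFun N μ) (lam : X → ℝ≥0)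
    (hlaw : ∀ x i, μ {ω | N x ω = i} = ENNReal.ofReal (poissonPMF (lam x : ℝ) i)) (a : ℕ) :
    Var[fun ω => ∑ x, ((N x ω).descFactorial a : ℝ); μ] =
      ∑ x, ∑ k ∈ range a, a.choose k * a.descFactorial (a - k) * (lam x : ℝ) ^ (a + k) := by
  set f : ℕ → ℝ := fun m => (m.descFactorial a : ℝ)
  have hN x := measurePreserving_poissonMeasure (hmeas x) (hlaw x)
  have hsum : (fun ω => ∑ x, f (N x ω)) = ∑ x, f ∘ N x := by
    ext ω
    simp
  have hL2 : ∀ x ∈ (univ : Finset X), MemLp (f ∘ N x) 2 μ := fun x _ =>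
    (memLp_descFactorial_poissonMeasure a).comp_measurePreserving (hN x)
  have hpair : Set.Pairwise (univ : Finset X) fun x y => IndepFun (f ∘ N x) (f ∘ N y) μ :=
    fun x _ y _ hxy => (hindep.indepFun hxy).comp measurable_from_nat measurable_from_nat
  rw [hsum, IndepFun.variance_sum hL2 hpair]
  refine sum_congr rfl fun x _ => ?_
  rw [← variance_descFactorial_poissonMeasure]
  exact (hN x).variance_fun_comp .of_discrete

theorem variance_sum_descFactorial_div_pow (hmeas : ∀ x, Measurable (N x))
    (hindep : iIndepFun N μ) {p : X → ℝ} (hp : ∀ x, 0 ≤ p x) {n : ℝ} (hn : 0 < n)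
    (hlaw : ∀ x i, μ {ω | N x ω = i} = ENNReal.ofReal (poissonPMF (n * p x) i)) (a : ℕ) :
    Var[fun ω => ∑ x, ((N x ω).descFactorial a : ℝ) / n ^ a; μ] = ∑ r ∈ range a,
      a.choose r * a.descFactorial (a - r) / n ^ (a - r) * ∑ x, p x ^ (a + r) := by
  have hvar : Var[fun ω => ∑ x, ((N x ω).descFactorial a : ℝ); μ] = ∑ x, ∑ r ∈ range a,
      a.choose r * a.descFactorial (a - r) * (n * p x) ^ (a + r) :=
    variance_sum_descFactorial_of_iIndepFun hmeas hindep
      (fun x => ⟨n * p x, mul_nonneg hn.le (hp x)⟩) hlaw a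
  simp only [div_eq_inv_mul, ← mul_sum, variance_const_mul, hvar]
  rw [sum_comm, mul_sum]
  refine sum_congr rfl fun r hr => ?_
  rw [mul_sum, mul_sum, ← pow_add_div_sq_pow hn.ne' (mem_range.1 hr).le]
  refine sum_congr rfl fun x _ => ?_
  ring

end Estimator

section PowerSums

variable {X : Type*} [Fintype X] {p : X → ℝ}

lemma le_rpow_sum_pow (hp : ∀ x, 0 ≤ p x) {a : ℕ} (ha : a ≠ 0) (x : X) :
    p x ≤ (∑ y, p y ^ a) ^ (a⁻¹ : ℝ) := by
  have hP : 0 ≤ ∑ y, p y ^ a := sum_nonneg fun y _ => pow_nonneg (hp y) a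
  rw [← pow_le_pow_iff_left₀ (hp x) (Real.rpow_nonneg hP _) ha, Real.rpow_inv_natCast_pow hP ha]
  exact single_le_sum (fun y _ => pow_nonneg (hp y) a) (mem_univ x)

lemma IsDist.one_le_rpow_sum_pow_mul (hp : IsDist p) {a : ℕ} (ha : a ≠ 0) :
    1 ≤ (∑ x, p x ^ a) ^ (a⁻¹ : ℝ) * (Fintype.card X : ℝ) ^ (((a : ℝ) - 1) / a) := by
  have hk : (0 : ℝ) < Fintype.card X := by
    rcases isEmpty_or_nonempty X with hX | hX
    · simpa using hp.2
    · exact_mod_cast Fintype.card_pos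
  obtain ⟨b, rfl⟩ := Nat.exists_eq_succ_of_ne_zero ha
  have hP : 0 ≤ ∑ x, p x ^ (b + 1) := sum_nonneg fun x _ => pow_nonneg (hp.1 x) _
  rw [← one_le_pow_iff_of_nonneg (mul_nonneg (Real.rpow_nonneg hP _) (by positivity)) ha,
    mul_pow, Real.rpow_inv_natCast_pow hP ha, ← Real.rpow_natCast _ (b + 1),
    ← Real.rpow_mul (Nat.cast_nonneg _), div_mul_cancel₀ _ (Nat.cast_ne_zero.2 ha),
    show ((b.succ : ℕ) : ℝ) - 1 = b by push_cast; ring, Real.rpow_natCast]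
  have hJensen := pow_sum_div_card_le_sum_pow (s := univ) (fun x _ => hp.1 x) b
  rw [hp.2, one_pow, card_univ, div_le_iff₀ (by positivity)] at hJensen
  exact hJensen

lemma IsDist.sum_pow_add_div_sq_le (hp : IsDist p) {a r : ℕ} (ha : a ≠ 0) (hr : r ≤ a) :
    (∑ x, p x ^ (a + r)) / (∑ x, p x ^ a) ^ 2 ≤
      ((Fintype.card X : ℝ) ^ (((a : ℝ) - 1) / a)) ^ (a - r) := by
  set P := ∑ x, p x ^ a
  set t := P ^ (a⁻¹ : ℝ)
  have htu : 1 ≤ t * (Fintype.card X : ℝ) ^ (((a : ℝ) - 1) / a) :=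
    hp.one_le_rpow_sum_pow_mul ha
  have hP : 0 ≤ P := sum_nonneg fun x _ => pow_nonneg (hp.1 x) a
  have ht : 0 < t := by
    by_contra! h
    have ht0 : t = 0 := le_antisymm h (Real.rpow_nonneg hP _)
    rw [ht0, zero_mul] at htu
    linarith
  have hPt : P = t ^ a := (Real.rpow_inv_natCast_pow hP ha).symm
  have hQ : ∑ x, p x ^ (a + r) ≤ t ^ r * P := by
    rw [mul_sum]
    refine sum_le_sum fun x _ => ?_
    rw [pow_add, mul_comm]
    exact mul_le_mul_of_nonneg_right
      (pow_le_pow_left₀ (hp.1 x) (le_rpow_sum_pow hp.1 ha x) r) (pow_nonneg (hp.1 x) a)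
  calc (∑ x, p x ^ (a + r)) / P ^ 2 ≤ t ^ r * P / P ^ 2 := by gcongr
    _ = t⁻¹ ^ (a - r) := by
      obtain ⟨m, rfl⟩ := Nat.exists_eq_add_of_le hr
      rw [hPt, Nat.add_sub_cancel_left, pow_add, inv_pow]
      field_simp
    _ ≤ _ := by
      gcongr
      exact (inv_le_iff_one_le_mul₀' ht).mpr htu

end PowerSums

theorem biasCorrected_variance_bound_general {X : Type*} [Fintype X] {k : ℕ}
    (hk : Fintype.card X = k)
    (p : X → ℝ) (hp : IsDist p) (n : ℝ) (hn : 0 < n)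
    {Ω : Type*} [MeasurableSpace Ω] (μ : Measure Ω)
    (N : X → Ω → ℕ) (hmeas : ∀ x, Measurable (N x))
    (hindep : iIndepFun N μ)
    (hpois : ∀ x i, μ {ω | N x ω = i} = ENNReal.ofReal (poissonPMF (n * p x) i))
    (α : ℕ) :
    variance (fun ω => ∑ x, ((Nat.descFactorial (N x ω) α : ℝ) / n ^ α)) μ ≤
      (1 / n ^ (2 * α)) * ∑ r ∈ Finset.range α,
        n ^ (α + r) * (Nat.choose α r : ℝ) * (α : ℝ) ^ (α - r) *
          (∑ x, p x ^ ((α : ℝ) + r)) ∧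
    variance (fun ω => ∑ x, ((Nat.descFactorial (N x ω) α : ℝ) / n ^ α)) μ /
        (∑ x, p x ^ (α : ℝ)) ^ 2 ≤
      ∑ r ∈ Finset.range α,
        ((α : ℝ) ^ 2 * (k : ℝ) ^ (((α : ℝ) - 1) / α) / n) ^ (α - r) := by
  have hp0 : ∀ x, 0 ≤ p x := hp.1
  rw [variance_sum_descFactorial_div_pow hmeas hindep hp0 hn hpois α]
  simp only [← Nat.cast_add, Real.rpow_natCast]
  constructor
  · rw [mul_sum]
    refine sum_le_sum fun r hr => ?_
    calc _ ≤ α.choose r * (α : ℝ) ^ (α - r) / n ^ (α - r) * ∑ x, p x ^ (α + r) := by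
          gcongr
          · exact sum_nonneg fun x _ => pow_nonneg (hp0 x) _
          · exact_mod_cast Nat.descFactorial_le_pow α (α - r)
      _ = _ := by
          rw [div_eq_mul_inv _ (n ^ (α - r)), ← pow_add_div_sq_pow hn.ne' (mem_range.1 hr).le]
          ring
  · rw [sum_div]
    refine sum_le_sum fun r hr => ?_
    have hr' := mem_range.1 hr
    rw [show ((α : ℝ) ^ 2 * (k : ℝ) ^ (((α : ℝ) - 1) / α) / n) ^ (α - r) =
      (α : ℝ) ^ (α - r) * (α : ℝ) ^ (α - r) / n ^ (α - r) *
        ((k : ℝ) ^ (((α : ℝ) - 1) / α)) ^ (α - r) by ring, mul_div_assoc]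
    gcongr
    · exact div_nonneg (sum_nonneg fun x _ => pow_nonneg (hp0 x) _) (sq_nonneg _)
    · rw [← Nat.choose_symm hr'.le]
      exact_mod_cast Nat.choose_le_pow α (α - r)
    · exact_mod_cast Nat.descFactorial_le_pow α (α - r)
    · exact hk ▸ hp.sum_pow_add_div_sq_le (by omega) hr'.le

/-- Variance bound for the bias-corrected estimator of the power sum `P_α(p)` under Poisson
sampling, for integer `α > 1`. -/
theorem biasCorrected_variance_bound {X : Type*} [Fintype X] {k : ℕ}
    (hk : Fintype.card X = k)
    (p : X → ℝ) (hp : IsDist p) (n : ℝ) (hn : 0 < n)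
    {Ω : Type*} [MeasurableSpace Ω] (μ : Measure Ω) [IsProbabilityMeasure μ]
    (N : X → Ω → ℕ) (hmeas : ∀ x, Measurable (N x))
    (hindep : iIndepFun N μ)
    (hpois : ∀ x i, μ {ω | N x ω = i} = ENNReal.ofReal (poissonPMF (n * p x) i))
    (α : ℕ) (hα : 1 < α) :
    variance (fun ω => ∑ x, ((Nat.descFactorial (N x ω) α : ℝ) / n ^ α)) μ ≤
      (1 / n ^ (2 * α)) * ∑ r ∈ Finset.range α,
        n ^ (α + r) * (Nat.choose α r : ℝ) * (α : ℝ) ^ (α - r) *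
          (∑ x, p x ^ ((α : ℝ) + r)) ∧
    variance (fun ω => ∑ x, ((Nat.descFactorial (N x ω) α : ℝ) / n ^ α)) μ /
        (∑ x, p x ^ (α : ℝ)) ^ 2 ≤
      ∑ r ∈ Finset.range α,
        ((α : ℝ) ^ 2 * (k : ℝ) ^ (((α : ℝ) - 1) / α) / n) ^ (α - r) :=
  biasCorrected_variance_bound_general hk p hp n hn μ N hmeas hindep hpois α
end

section
/- Let 0 < α < 1, let p be a probability distribution over an alphabet of k elements, let n > 0, and let (N_x)_x be independent with N_x ~ Poisson(n p_x). Then the bias of the empirical power-sum estimator satisfies | E[ Σ_x (N_x/n)^α ] − P_α(p) | ≤ 2 k / n^α ≤ 2 P_α(p) · (k^{1/α}/n)^α. -/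
/-!
For `N ~ Poisson(λ)` the concavity of `t ↦ t ^ α` gives `E[N ^ α] ≤ λ ^ α` (Jensen), so every
symbol contributes a nonnegative bias. Conversely, the tangent line of `t ^ α` at `λ` exceeds
`t ^ α` by at most `(1 - α) λ ^ (α - 2) (t - λ) ^ 2`; taking expectations with `Var N = λ` bounds
the bias `λ ^ α - E[N ^ α]` by `(1 - α) λ ^ (α - 1) ≤ 1` when `λ ≥ 1`, while for `λ ≤ 1` it is at
most `λ ^ α ≤ 1`. With `λ = n p_x`, dividing by `n ^ α` and summing over the `k` symbols gives a
bias of at most `k / n ^ α`. The second inequality is `P_α(p) ≥ ∑ p_x = 1`.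
-/

open MeasureTheory ProbabilityTheory Real

open scoped NNReal Nat

namespace Real

variable {α : ℝ}

lemma rpow_le_one_add_self {x : ℝ} (hx : 0 ≤ x) (hα0 : 0 ≤ α) (hα1 : α ≤ 1) :
    x ^ α ≤ 1 + x := by
  rcases le_total x 1 with h | h
  · linarith [rpow_le_one hx h hα0]
  · linarith [rpow_le_self_of_one_le h hα1]

lemma one_add_mul_sub_rpow_le {u : ℝ} (hu : 0 ≤ u) (hα0 : 0 < α) (hα1 : α ≤ 1) :
    1 + α * (u - 1) - u ^ α ≤ (1 - α) * (u - 1) ^ 2 := by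
  set D := α + (1 - α) * u
  have hαD : α ≤ D := by nlinarith
  have hD : 0 < D := hα0.trans_le hαD
  -- Bernoulli's inequality for the exponent `1 - α` gives `u / D ≤ u ^ α`.
  have hBernoulli : u ^ (1 - α) ≤ D := by
    have := rpow_one_add_le_one_add_mul_self (s := u - 1) (by linarith) (by linarith : 0 ≤ 1 - α)
      (by linarith)
    rw [add_sub_cancel] at this
    linarith
  have hu_le : u ≤ u ^ α * D :=
    calc u = u ^ α * u ^ (1 - α) := by
          rw [← rpow_add' hu (by norm_num), add_sub_cancel, rpow_one]
      _ ≤ u ^ α * D := mul_le_mul_of_nonneg_left hBernoulli (rpow_nonneg hu α)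
  calc 1 + α * (u - 1) - u ^ α ≤ 1 + α * (u - 1) - u / D := by
        gcongr; rwa [div_le_iff₀ hD]
    _ = α * (1 - α) * (u - 1) ^ 2 / D := by field_simp; ring
    _ ≤ (1 - α) * (u - 1) ^ 2 := by
        rw [div_le_iff₀ hD]
        nlinarith [mul_nonneg (sub_nonneg.2 hα1) (sq_nonneg (u - 1))]

lemma rpow_tangent_sub_rpow_le {m t : ℝ} (hm : 0 < m) (ht : 0 ≤ t) (hα0 : 0 < α)
    (hα1 : α ≤ 1) :
    m ^ α + α * m ^ (α - 1) * (t - m) - t ^ α ≤ (1 - α) * m ^ (α - 2) * (t - m) ^ 2 := by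
  have hmα : m ^ α ≠ 0 := (rpow_pos_of_pos hm α).ne'
  have h := mul_le_mul_of_nonneg_left (one_add_mul_sub_rpow_le (div_nonneg ht hm.le) hα0 hα1)
    (rpow_nonneg hm.le α)
  rw [div_rpow ht hm.le] at h
  calc m ^ α + α * m ^ (α - 1) * (t - m) - t ^ α
      = m ^ α * (1 + α * (t / m - 1) - t ^ α / m ^ α) := by rw [rpow_sub_one hm.ne']; field_simp
    _ ≤ m ^ α * ((1 - α) * (t / m - 1) ^ 2) := h
    _ = (1 - α) * m ^ (α - 2) * (t - m) ^ 2 := by rw [rpow_sub hm, rpow_two]; field_simp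

end Real

section Moments

variable {Ω : Type*} [MeasurableSpace Ω] {μ : Measure Ω} {Y : Ω → ℝ} {α : ℝ}

lemma MeasureTheory.Integrable.rpow_const_of_le_one [IsFiniteMeasure μ] (hY : Integrable Y μ)
    (hY0 : 0 ≤ᵐ[μ] Y) (hα0 : 0 ≤ α) (hα1 : α ≤ 1) :
    Integrable (fun ω ↦ Y ω ^ α) μ := by
  refine ((integrable_const 1).add hY).mono' (hY.aemeasurable.pow_const α).aestronglyMeasurable ?_
  filter_upwards [hY0] with ω hω
  rw [norm_of_nonneg (rpow_nonneg hω α)]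
  exact rpow_le_one_add_self hω hα0 hα1

variable [IsProbabilityMeasure μ]

lemma integral_rpow_le_rpow_integral (hY : Integrable Y μ) (hY0 : 0 ≤ᵐ[μ] Y) (hα0 : 0 ≤ α)
    (hα1 : α ≤ 1) : ∫ ω, Y ω ^ α ∂μ ≤ (∫ ω, Y ω ∂μ) ^ α :=
  (concaveOn_rpow hα0 hα1).le_map_integral (continuous_rpow_const hα0).continuousOn isClosed_Ici
    hY0 hY (hY.rpow_const_of_le_one hY0 hα0 hα1)

lemma rpow_integral_sub_integral_rpow_le (hY : MemLp Y 2 μ) (hY0 : 0 ≤ᵐ[μ] Y)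
    (hm : 0 < ∫ ω, Y ω ∂μ) (hα0 : 0 < α) (hα1 : α ≤ 1) :
    (∫ ω, Y ω ∂μ) ^ α - ∫ ω, Y ω ^ α ∂μ
      ≤ (1 - α) * (∫ ω, Y ω ∂μ) ^ (α - 2) * Var[Y; μ] := by
  set m := ∫ ω, Y ω ∂μ
  have hY1 : Integrable Y μ := hY.integrable one_le_two
  have hdev : Integrable (fun ω ↦ Y ω - m) μ := hY1.sub (integrable_const m)
  have hsq : Integrable (fun ω ↦ (Y ω - m) ^ 2) μ := (hY.sub (memLp_const m)).integrable_sq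
  have hmean : ∫ ω, (Y ω - m) ∂μ = 0 := by
    rw [integral_sub hY1 (integrable_const m), integral_const, probReal_univ, one_smul, sub_self]
  have htangent : Integrable (fun ω ↦ m ^ α + α * m ^ (α - 1) * (Y ω - m)) μ :=
    (integrable_const _).add (hdev.const_mul _)
  have hlower : ∫ ω, (m ^ α + α * m ^ (α - 1) * (Y ω - m)
      - (1 - α) * m ^ (α - 2) * (Y ω - m) ^ 2) ∂μ ≤ ∫ ω, Y ω ^ α ∂μ := by
    refine integral_mono_ae (htangent.sub (hsq.const_mul _))
      (hY1.rpow_const_of_le_one hY0 hα0.le hα1) ?_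
    filter_upwards [hY0] with ω hω
    linarith [rpow_tangent_sub_rpow_le hm hω hα0 hα1]
  rw [integral_sub htangent (hsq.const_mul _), integral_add (integrable_const _) (hdev.const_mul _),
    integral_const_mul, integral_const_mul, hmean, integral_const, probReal_univ, one_smul,
    ← variance_eq_integral hY1.aemeasurable] at hlower
  linarith

end Moments

namespace ProbabilityTheory

/-- The Poisson identity `E[N f(N)] = r E[f(N + 1)]`. -/
lemma hasSum_poisson_mul_natCast_mul {r s : ℝ} {f : ℕ → ℝ}
    (h : HasSum (fun n ↦ exp (-r) * r ^ n / n ! * f (n + 1)) s) :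
    HasSum (fun n ↦ exp (-r) * r ^ n / n ! * (n * f n)) (r * s) := by
  refine (hasSum_nat_add_iff' 1).1 ?_
  simp only [Finset.range_one, Finset.sum_singleton, CharP.cast_eq_zero, zero_mul, mul_zero,
    sub_zero]
  have hshift : (fun n ↦ exp (-r) * r ^ (n + 1) / (n + 1)! * ((n + 1 : ℕ) * f (n + 1)))
      = fun n ↦ r * (exp (-r) * r ^ n / n ! * f (n + 1)) := by
    funext n
    rw [Nat.factorial_succ, pow_succ]
    push_cast
    field_simp
  rw [hshift]
  exact h.mul_left r

lemma hasSum_poisson_natCast (r : ℝ≥0) : HasSum (fun n ↦ exp (-r) * r ^ n / n ! * n) r := by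
  have h := hasSum_poisson_mul_natCast_mul (f := fun _ ↦ 1) (s := 1) (r := r)
    (by simpa only [mul_one] using hasSum_one_poissonMeasure r)
  simpa only [mul_one] using h

lemma hasSum_poisson_sq_sub (r : ℝ≥0) :
    HasSum (fun n ↦ exp (-r) * r ^ n / n ! * ((n : ℝ) - r) ^ 2) r := by
  have hfactorial : HasSum (fun n ↦ exp (-r) * r ^ n / n ! * (n * ((n : ℝ) - 1))) (r * r) :=
    hasSum_poisson_mul_natCast_mul (by simpa using hasSum_poisson_natCast r)
  convert (hfactorial.add ((hasSum_poisson_natCast r).mul_left (1 - 2 * (r : ℝ)))).add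
    ((hasSum_one_poissonMeasure r).mul_left ((r : ℝ) ^ 2)) using 1
  · ext n; ring
  · ring

variable (r : ℝ≥0)

lemma memLp_two_natCast_poissonMeasure :
    MemLp (fun n : ℕ ↦ (n : ℝ)) 2 (poissonMeasure r) := by
  have hsq : Integrable (fun n : ℕ ↦ ((n : ℝ) - r) ^ 2) (poissonMeasure r) := by
    rw [integrable_poissonMeasure_iff]
    simpa only [norm_pow, norm_eq_abs, sq_abs] using (hasSum_poisson_sq_sub r).summable
  simpa only [Pi.add_def, sub_add_cancel] using
    ((memLp_two_iff_integrable_sq .of_discrete).2 hsq).add (memLp_const (r : ℝ))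

lemma integral_natCast_poissonMeasure : ∫ n, (n : ℝ) ∂poissonMeasure r = r := by
  simpa only [integral_poissonMeasure, smul_eq_mul] using (hasSum_poisson_natCast r).tsum_eq

lemma variance_natCast_poissonMeasure : Var[fun n : ℕ ↦ (n : ℝ); poissonMeasure r] = r := by
  rw [variance_eq_integral .of_discrete, integral_natCast_poissonMeasure]
  simpa only [integral_poissonMeasure, smul_eq_mul] using (hasSum_poisson_sq_sub r).tsum_eq

lemma rpow_sub_integral_rpow_poissonMeasure_mem_Icc {α : ℝ} (hα0 : 0 < α) (hα1 : α ≤ 1) :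
    (r : ℝ) ^ α - ∫ n, (n : ℝ) ^ α ∂poissonMeasure r ∈ Set.Icc 0 1 := by
  have hY := memLp_two_natCast_poissonMeasure r
  have hY0 : 0 ≤ᵐ[poissonMeasure r] fun n : ℕ ↦ (n : ℝ) :=
    .of_forall fun n ↦ n.cast_nonneg
  have hmean := integral_natCast_poissonMeasure r
  have hjensen := integral_rpow_le_rpow_integral (hY.integrable one_le_two) hY0 hα0.le hα1
  rw [hmean] at hjensen
  refine ⟨sub_nonneg.2 hjensen, ?_⟩
  rcases le_or_gt (r : ℝ) 1 with hr | hr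
  · have : 0 ≤ ∫ n, (n : ℝ) ^ α ∂poissonMeasure r :=
      integral_nonneg fun n ↦ rpow_nonneg n.cast_nonneg α
    linarith [Real.rpow_le_one r.coe_nonneg hr hα0.le]
  · have h := rpow_integral_sub_integral_rpow_le hY hY0 (hmean ▸ one_pos.trans hr) hα0 hα1
    rw [hmean, variance_natCast_poissonMeasure] at h
    calc _ ≤ (1 - α) * (r : ℝ) ^ (α - 2) * r := h
      _ = (1 - α) * (r : ℝ) ^ (α - 1) := by
        rw [mul_assoc, ← rpow_add_one (by positivity), show α - 2 + 1 = α - 1 by ring]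
      _ ≤ 1 * 1 := by
        gcongr
        · linarith
        · exact rpow_le_one_of_one_le_of_nonpos hr.le (by linarith)
      _ = 1 := one_mul 1

lemma hasLaw_poissonMeasure_of_measure_eq {Ω : Type*} [MeasurableSpace Ω] {μ : Measure Ω}
    {N : Ω → ℕ} (hN : Measurable N) {r : ℝ≥0}
    (h : ∀ i, μ {ω | N ω = i} = ENNReal.ofReal (_root_.poissonPMF r i)) :
    HasLaw N (poissonMeasure r) μ where
  aemeasurable := hN.aemeasurable
  map_eq := Measure.ext_of_singleton fun i ↦ by
    rw [Measure.map_apply hN (measurableSet_singleton i), poissonMeasure_singleton]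
    exact h i

lemma HasLaw.integrable_comp {Ω 𝓧 E : Type*} [MeasurableSpace Ω] [MeasurableSpace 𝓧]
    [NormedAddCommGroup E] {μ : Measure Ω} {P : Measure 𝓧} {X : Ω → 𝓧}
    (hX : HasLaw X P μ) {f : 𝓧 → E} (hf : Integrable f P) : Integrable (f ∘ X) μ := by
  rw [← hX.map_eq] at hf
  exact hf.comp_aemeasurable hX.aemeasurable

section PoissonVariable

variable {Ω : Type*} [MeasurableSpace Ω] {μ : Measure Ω} {N : Ω → ℕ} {r : ℝ≥0}

lemma HasLaw.integrable_natCast_div_rpow (hN : HasLaw N (poissonMeasure r) μ) {n α : ℝ}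
    (hn : 0 ≤ n) (hα0 : 0 ≤ α) (hα1 : α ≤ 1) :
    Integrable (fun ω ↦ ((N ω : ℝ) / n) ^ α) μ :=
  hN.integrable_comp <| (((memLp_two_natCast_poissonMeasure r).integrable one_le_two).div_const n
    ).rpow_const_of_le_one (.of_forall fun i ↦ div_nonneg i.cast_nonneg hn) hα0 hα1

lemma HasLaw.rpow_div_sub_integral_rpow_div_mem_Icc (hN : HasLaw N (poissonMeasure r) μ)
    {n α : ℝ} (hn : 0 < n) (hα0 : 0 < α) (hα1 : α ≤ 1) :
    ((r : ℝ) / n) ^ α - ∫ ω, ((N ω : ℝ) / n) ^ α ∂μ ∈ Set.Icc 0 (1 / n ^ α) := by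
  have hnα : 0 < n ^ α := rpow_pos_of_pos hn α
  have h := rpow_sub_integral_rpow_poissonMeasure_mem_Icc r hα0 hα1
  have hE : ∫ ω, ((N ω : ℝ) / n) ^ α ∂μ
      = (∫ i, (i : ℝ) ^ α ∂poissonMeasure r) / n ^ α := by
    rw [← integral_div, ← hN.integral_comp .of_discrete]
    simp only [Function.comp_apply, div_rpow (Nat.cast_nonneg _) hn.le]
  rw [hE, div_rpow r.coe_nonneg hn.le, ← sub_div]
  exact ⟨div_nonneg h.1 hnα.le, div_le_div_of_nonneg_right h.2 hnα.le⟩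

end PoissonVariable

end ProbabilityTheory

lemma IsDist.le_one {X : Type*} [Fintype X] {p : X → ℝ} (hp : IsDist p) (x : X) : p x ≤ 1 :=
  hp.2 ▸ Finset.single_le_sum (fun y _ ↦ hp.1 y) (Finset.mem_univ x)

lemma IsDist.one_le_sum_rpow {X : Type*} [Fintype X] {p : X → ℝ} (hp : IsDist p) {α : ℝ}
    (hα : α ≤ 1) : 1 ≤ ∑ x, p x ^ α :=
  hp.2 ▸ Finset.sum_le_sum fun x _ ↦ Real.self_le_rpow_of_le_one (hp.1 x) (hp.le_one x) hα

theorem empirical_bias_bound_lt_one_general {X : Type*} [Fintype X] {k : ℕ}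
    (hk : Fintype.card X = k)
    (p : X → ℝ) (hp : IsDist p) (n : ℝ) (hn : 0 < n)
    {Ω : Type*} [MeasurableSpace Ω] (μ : Measure Ω) [IsProbabilityMeasure μ]
    (N : X → Ω → ℕ) (hmeas : ∀ x, Measurable (N x))
    (hpois : ∀ x i, μ {ω | N x ω = i} = ENNReal.ofReal (poissonPMF (n * p x) i))
    (α : ℝ) (hα0 : 0 < α) (hα1 : α < 1) :
    |(∫ ω, (∑ x, ((N x ω : ℝ) / n) ^ α) ∂μ) - ∑ x, p x ^ α| ≤ 2 * k / n ^ α ∧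
    2 * k / n ^ α ≤ 2 * (∑ x, p x ^ α) * ((k : ℝ) ^ (1 / α) / n) ^ α := by
  have hlaw (x : X) : HasLaw (N x) (poissonMeasure ⟨n * p x, mul_nonneg hn.le (hp.1 x)⟩) μ :=
    hasLaw_poissonMeasure_of_measure_eq (hmeas x) (hpois x)
  have hbias (x : X) :
      p x ^ α - ∫ ω, ((N x ω : ℝ) / n) ^ α ∂μ ∈ Set.Icc 0 (1 / n ^ α) := by
    convert (hlaw x).rpow_div_sub_integral_rpow_div_mem_Icc hn hα0 hα1.le using 3
    exact (mul_div_cancel_left₀ (p x) hn.ne').symm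
  rw [integral_finsetSum _ fun x _ ↦ (hlaw x).integrable_natCast_div_rpow hn.le hα0.le hα1.le,
    abs_sub_comm, ← Finset.sum_sub_distrib,
    abs_of_nonneg (Finset.sum_nonneg fun x _ ↦ (hbias x).1),
    div_rpow (by positivity) hn.le, one_div, rpow_inv_rpow k.cast_nonneg hα0.ne']
  constructor
  · calc _ ≤ ∑ _x : X, 1 / n ^ α := Finset.sum_le_sum fun x _ ↦ (hbias x).2
      _ = k / n ^ α := by simp [hk, div_eq_mul_inv]
      _ ≤ 2 * k / n ^ α := by gcongr; linarith
  · calc 2 * k / n ^ α = 2 * 1 * (k / n ^ α) := by ring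
      _ ≤ 2 * (∑ x, p x ^ α) * (k / n ^ α) := by gcongr; exact hp.one_le_sum_rpow hα1.le

/-- Bias bound for the empirical estimator of the power sum `P_α(p)` under Poisson sampling,
for real `0 < α < 1`. -/
theorem empirical_bias_bound_lt_one {X : Type*} [Fintype X] {k : ℕ}
    (hk : Fintype.card X = k)
    (p : X → ℝ) (hp : IsDist p) (n : ℝ) (hn : 0 < n)
    {Ω : Type*} [MeasurableSpace Ω] (μ : Measure Ω) [IsProbabilityMeasure μ]
    (N : X → Ω → ℕ) (hmeas : ∀ x, Measurable (N x))
    (hindep : iIndepFun N μ)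
    (hpois : ∀ x i, μ {ω | N x ω = i} = ENNReal.ofReal (poissonPMF (n * p x) i))
    (α : ℝ) (hα0 : 0 < α) (hα1 : α < 1) :
    |(∫ ω, (∑ x, ((N x ω : ℝ) / n) ^ α) ∂μ) - ∑ x, p x ^ α| ≤ 2 * k / n ^ α ∧
    2 * k / n ^ α ≤ 2 * (∑ x, p x ^ α) * ((k : ℝ) ^ (1 / α) / n) ^ α :=
  empirical_bias_bound_lt_one_general hk p hp n hn μ N hmeas hpois α hα0 hα1
end

section
/- For every positive integer d and every real number α with α ∉ {1, 2, …, d−1}, the alternating binomial sum Σ_{i=1}^{d} C(d, i) (−1)^{d−i} i^α is nonzero. (This sum vanishes exactly at α = 1, 2, …, d−1: a linear combination of the d exponentials α ↦ i^α, i = 1, …, d, can have at most d−1 real zeros.) -/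
/-!
Writing `i ^ t = exp (t log i)`, the sum is an exponential sum in `t` with `d` nonzero
coefficients and distinct frequencies `log 1, …, log d`. Such a sum has at most `d - 1` real
zeros: divide by one of its exponentials and apply Rolle's theorem, the derivative being an
exponential sum with one term fewer. At `t = m ∈ {1, …, d - 1}` the sum is the `d`-th forward
difference of `x ↦ x ^ m` at `0`, hence vanishes; a further zero `α` would be one too many.
-/

open Real Finset

theorem sum_Icc_choose_mul_neg_one_pow_mul_pow_eq_zero {R : Type*} [CommRing R] {m d : ℕ}
    (hm : m ≠ 0) (hmd : m < d) :
    ∑ i ∈ Icc 1 d, (d.choose i : R) * (-1) ^ (d - i) * (i : R) ^ m = 0 := by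
  have h := congr_fun (fwdDiff_iter_pow_eq_zero_of_lt (R := R) hmd) 0
  rw [fwdDiff_iter_eq_sum_shift, Nat.range_succ_eq_Icc_zero, ← sum_Ioc_add_eq_sum_Icc d.zero_le]
    at h
  rw [show Icc 1 d = Ioc 0 d from rfl]
  simpa [zero_pow hm, mul_comm] using h

theorem exists_finset_card_le_add_one_of_hasDerivAt {f f' : ℝ → ℝ}
    (hf : ∀ x, HasDerivAt f (f' x) x) {T : Finset ℝ} (hT : ∀ t ∈ T, f t = 0) :
    ∃ T' : Finset ℝ, #T ≤ #T' + 1 ∧ ∀ t ∈ T', f' t = 0 := by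
  have rolle : ∀ x y, ∃ c, x ∈ T → y ∈ T → x < y → c ∈ Set.Ioo x y ∧ f' c = 0 := by
    intro x y
    by_cases h : x ∈ T ∧ y ∈ T ∧ x < y
    · obtain ⟨hx, hy, hxy⟩ := h
      obtain ⟨c, hc, hc'⟩ := exists_hasDerivAt_eq_zero hxy
        (fun z _ => (hf z).continuousAt.continuousWithinAt) ((hT x hx).trans (hT y hy).symm)
        fun z _ => hf z
      exact ⟨c, fun _ _ _ => ⟨hc, hc'⟩⟩
    · exact ⟨0, fun hx hy hxy => absurd ⟨hx, hy, hxy⟩ h⟩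
  choose c hc using rolle
  refine ⟨((T ×ˢ T).image fun p => c p.1 p.2).filter (f' · = 0), ?_,
    fun t ht => (mem_filter.1 ht).2⟩
  refine card_le_of_interleaved fun x hx y hy hxy _ => ⟨c x y, ?_, (hc x y hx hy hxy).1⟩
  exact mem_filter.2 ⟨mem_image.2 ⟨(x, y), mem_product.2 ⟨hx, hy⟩, rfl⟩, (hc x y hx hy hxy).2⟩

theorem card_lt_card_of_forall_sum_mul_exp_eq_zero {ι : Type*} {s : Finset ι} (hs : s.Nonempty)
    {a b : ι → ℝ} (ha : ∀ i ∈ s, a i ≠ 0) (hb : Set.InjOn b s) {T : Finset ℝ}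
    (hT : ∀ t ∈ T, ∑ i ∈ s, a i * exp (b i * t) = 0) : #T < #s := by
  induction hs using Nonempty.cons_induction generalizing a b T with
  | singleton j =>
    suffices T = ∅ by simp [this]
    refine eq_empty_of_forall_notMem fun t ht => ?_
    simpa [ha j (mem_singleton_self j), exp_ne_zero] using hT t ht
  | cons j s hj hs ih =>
    rw [coe_cons, Set.injOn_insert (by simpa using hj)] at hb
    have hbj : ∀ i ∈ s, b i - b j ≠ 0 := fun i hi h => hb.2 ⟨i, hi, sub_eq_zero.1 h⟩
    let g t := a j + ∑ i ∈ s, a i * exp ((b i - b j) * t)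
    let g' t := ∑ i ∈ s, a i * (b i - b j) * exp ((b i - b j) * t)
    have hg : ∀ t, g t = exp (-(b j * t)) * ∑ i ∈ cons j s hj, a i * exp (b i * t) := by
      intro t
      simp only [g, sum_cons, mul_add, mul_sum, mul_left_comm _ (a _), ← exp_add]
      congr 1
      · simp
      · exact sum_congr rfl fun i _ => by ring_nf
    have hg' : ∀ t, HasDerivAt g (g' t) t := by
      intro t
      have := (hasDerivAt_const t (a j)).fun_add <| HasDerivAt.fun_sum (u := s) fun i _ =>
        (((hasDerivAt_id' t).const_mul (b i - b j)).exp).const_mul (a i)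
      refine this.congr_deriv ?_
      simp only [g', zero_add, mul_one]
      exact sum_congr rfl fun i _ => by ring
    obtain ⟨T', hTT', hT'⟩ := exists_finset_card_le_add_one_of_hasDerivAt hg'
      (T := T) fun t ht => by rw [hg, hT t ht, mul_zero]
    have := ih (fun i hi => mul_ne_zero (ha i (mem_cons_of_mem hi)) (hbj i hi))
      (fun x hx y hy h => hb.1 hx hy (sub_left_injective h)) hT'
    rw [card_cons]
    omega

theorem card_lt_card_of_forall_sum_mul_rpow_eq_zero {ι : Type*} {s : Finset ι}
    (hs : s.Nonempty) {a c : ι → ℝ} (ha : ∀ i ∈ s, a i ≠ 0) (hc : ∀ i ∈ s, 0 < c i)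
    (hc_inj : Set.InjOn c s) {T : Finset ℝ} (hT : ∀ t ∈ T, ∑ i ∈ s, a i * c i ^ t = 0) :
    #T < #s := by
  refine card_lt_card_of_forall_sum_mul_exp_eq_zero hs ha
    (log_injOn_pos.comp hc_inj fun i hi => hc i hi) fun t ht => ?_
  rw [← hT t ht]
  exact sum_congr rfl fun i hi => by rw [Function.comp_apply, rpow_def_of_pos (hc i hi)]

/-- The alternating binomial sum `∑_{i=1}^d C(d,i) (-1)^(d-i) i^α` is nonzero for every real
`α ∉ {1, 2, …, d-1}`: a linear combination of the `d` exponentials `α ↦ i^α`, `i = 1, …, d`,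
can have at most `d - 1` real zeros, and this one vanishes exactly at `α = 1, …, d-1`. -/
theorem alternating_binomial_sum_ne_zero (d : ℕ) (hd : 0 < d)
    (α : ℝ) (hα : ∀ m : ℕ, 1 ≤ m → m ≤ d - 1 → α ≠ m) :
    ∑ i ∈ Finset.Icc 1 d, (Nat.choose d i : ℝ) * (-1) ^ (d - i) * (i : ℝ) ^ α ≠ 0 := by
  intro hsum
  have hα' : α ∉ (Icc 1 (d - 1)).image ((↑) : ℕ → ℝ) := by
    simpa using fun m hm₁ hm₂ => (hα m hm₁ hm₂).symm
  have hzeros : ∀ t ∈ insert α ((Icc 1 (d - 1)).image ((↑) : ℕ → ℝ)),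
      ∑ i ∈ Icc 1 d, (d.choose i : ℝ) * (-1) ^ (d - i) * (i : ℝ) ^ t = 0 := by
    simp only [mem_insert, mem_image, mem_Icc]
    rintro t (rfl | ⟨m, ⟨hm₁, hm₂⟩, rfl⟩)
    · exact hsum
    · simpa using sum_Icc_choose_mul_neg_one_pow_mul_pow_eq_zero (R := ℝ) (m := m) (by omega)
        (by omega)
  have := card_lt_card_of_forall_sum_mul_rpow_eq_zero (nonempty_Icc.2 hd)
    (fun i hi => mul_ne_zero (Nat.cast_ne_zero.2 (Nat.choose_pos (mem_Icc.1 hi).2).ne')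
      (pow_ne_zero _ (neg_ne_zero.2 one_ne_zero)))
    (fun i hi => Nat.cast_pos.2 (mem_Icc.1 hi).1) Nat.cast_injective.injOn hzeros
  rw [card_insert_of_notMem hα', card_image_of_injective _ Nat.cast_injective, Nat.card_Icc,
    Nat.card_Icc] at this
  omega
end

section
/- For every integer α > 1 and every 0 < ε < 1/2, there exist constants c > 0 and δ_0 > 0 (depending on α and ε) such that for every 0 < δ < δ_0 and all sufficiently large k the following holds: if n ≤ c · k^{(α−1)/α} / δ², then for every estimator f : X^n → ℝ there exists a probability distribution p over an alphabet X of k elements with P_{X^n ~ p^{⊗n}}( |H_α(p) − f(X_1, …, X_n)| > δ ) ≥ ε. In other words, S_α(k, δ, ε) = Ω( k^{(α−1)/α} / δ² ). -/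
/-!
Le Cam's two-point method. Let `P` put mass `μ = k^{-(α-1)/α}` on one symbol and spread the
rest uniformly over the other `k - 1`, and let `Q` do the same with mass `μ(1 + θ)`, `θ ≍ δ`.
Since `μ^α ≍ k^{1-α}`, the spike carries a constant fraction of the power sum, so moving it
raises the power sum by a factor `1 + Ω(θ)` and the entropies differ by more than `2δ`. The
Bhattacharyya coefficient of `P` and `Q` is `1 - O(μθ²)`, so for `n ≲ 1/(μθ²) ≍ k^{(α-1)/α}/δ²`
the laws of `n` samples are at total variation distance at most `1 - 2ε`, and no estimator can
be `δ`-accurate with probability `1 - ε` under both.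
-/

open Real

/-- The Rényi entropy of order `α ≠ 1`. -/
noncomputable def renyiEntropy {X : Type*} [Fintype X] (α : ℝ) (p : X → ℝ) : ℝ :=
  (1 / (1 - α)) * Real.log (∑ x, p x ^ α)

open Classical in
/-- The probability, under `n` i.i.d. samples from `p`, of the event `E` on sample sequences. -/
noncomputable def probEvent {X : Type*} [Fintype X] {n : ℕ} (p : X → ℝ)
    (E : (Fin n → X) → Prop) : ℝ :=
  ∑ s : Fin n → X, if E s then ∏ i, p (s i) else 0

open Finset

section Sampling

variable {X : Type*} [Fintype X] {n : ℕ}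

lemma probEvent_add_probEvent_not {p : X → ℝ} (hp : ∑ x, p x = 1)
    (E : (Fin n → X) → Prop) : probEvent p E + probEvent p (fun s => ¬ E s) = 1 := by
  classical
  rw [probEvent, probEvent, ← sum_add_distrib, ← one_pow n, ← hp, Fintype.sum_pow]
  refine sum_congr rfl fun s _ => ?_
  by_cases hs : E s <;> simp [hs]

lemma probEvent_mono {p : X → ℝ} (hp : ∀ x, 0 ≤ p x) {E F : (Fin n → X) → Prop}
    (hEF : ∀ s, E s → F s) : probEvent p E ≤ probEvent p F := by
  classical
  refine sum_le_sum fun s _ => ?_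
  by_cases hE : E s
  · simp [hE, hEF s hE]
  · simp only [hE, if_false]
    split_ifs
    exacts [prod_nonneg fun i _ => hp (s i), le_rfl]

lemma probEvent_le_add_sum_abs_sub (p q : X → ℝ) (E : (Fin n → X) → Prop) :
    probEvent p E ≤ probEvent q E + ∑ s : Fin n → X, |∏ i, p (s i) - ∏ i, q (s i)| := by
  classical
  rw [probEvent, probEvent, ← sum_add_distrib]
  refine sum_le_sum fun s _ => ?_
  by_cases hE : E s
  · simp only [hE, if_true]
    linarith [le_abs_self (∏ i, p (s i) - ∏ i, q (s i))]
  · simp [hE]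

lemma le_cam_two_point {p q : X → ℝ} (hp : ∑ x, p x = 1) (hq : ∀ x, 0 ≤ q x)
    (f : (Fin n → X) → ℝ) {a b δ ε : ℝ} (hab : 2 * δ < a - b)
    (htv : ∑ s : Fin n → X, |∏ i, p (s i) - ∏ i, q (s i)| ≤ 1 - 2 * ε) :
    ε ≤ probEvent p (fun s => δ < |a - f s|) ∨ ε ≤ probEvent q (fun s => δ < |b - f s|) := by
  by_contra! h
  have hnear : ∀ s, ¬ δ < |a - f s| → δ < |b - f s| := fun s hs => by
    rw [not_lt, abs_le] at hs
    rw [lt_abs]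
    right
    linarith
  have hcompl := probEvent_add_probEvent_not hp (fun s => δ < |a - f s|)
  have hclose := probEvent_le_add_sum_abs_sub p q (fun s => ¬ δ < |a - f s|)
  have hmono := probEvent_mono hq hnear
  linarith

end Sampling

section Bhattacharyya

variable {Y : Type*} [Fintype Y]

noncomputable def bhattacharyya (W V : Y → ℝ) : ℝ := ∑ y, √(W y * V y)

lemma bhattacharyya_nonneg (W V : Y → ℝ) : 0 ≤ bhattacharyya W V :=
  sum_nonneg fun _ _ => Real.sqrt_nonneg _

lemma sq_sum_abs_sub_le {W V : Y → ℝ} (hW : IsDist W) (hV : IsDist V) :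
    (∑ y, |W y - V y|) ^ 2 ≤ 4 * (1 - bhattacharyya W V ^ 2) := by
  have hsqrt : ∀ y, √(W y * V y) = √(W y) * √(V y) := fun y => Real.sqrt_mul (hW.1 y) _
  have hminus : ∑ y, (√(W y) - √(V y)) ^ 2 = 2 - 2 * bhattacharyya W V := by
    have hterm : ∀ y, (√(W y) - √(V y)) ^ 2 = W y + V y - 2 * √(W y * V y) := fun y => by
      rw [hsqrt, sub_sq, Real.sq_sqrt (hW.1 y), Real.sq_sqrt (hV.1 y)]; ring
    simp only [hterm, sum_sub_distrib, sum_add_distrib, hW.2, hV.2, ← mul_sum, bhattacharyya]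
    ring
  have hplus : ∑ y, (√(W y) + √(V y)) ^ 2 = 2 + 2 * bhattacharyya W V := by
    have hterm : ∀ y, (√(W y) + √(V y)) ^ 2 = W y + V y + 2 * √(W y * V y) := fun y => by
      rw [hsqrt, add_sq, Real.sq_sqrt (hW.1 y), Real.sq_sqrt (hV.1 y)]; ring
    simp only [hterm, sum_add_distrib, hW.2, hV.2, ← mul_sum, bhattacharyya]
    ring
  calc (∑ y, |W y - V y|) ^ 2
      ≤ (∑ y, (√(W y) - √(V y)) ^ 2) * ∑ y, (√(W y) + √(V y)) ^ 2 := by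
        refine sum_sq_le_sum_mul_sum_of_sq_le_mul _ (fun _ _ => sq_nonneg _)
          (fun _ _ => sq_nonneg _) fun y _ => le_of_eq ?_
        rw [sq_abs, ← mul_pow, mul_comm, ← sq_sub_sq, Real.sq_sqrt (hW.1 y),
          Real.sq_sqrt (hV.1 y)]
    _ = 4 * (1 - bhattacharyya W V ^ 2) := by rw [hminus, hplus]; ring

end Bhattacharyya

section Iid

variable {X : Type*} [Fintype X]

lemma bhattacharyya_pi {p q : X → ℝ} (hp : ∀ x, 0 ≤ p x) (hq : ∀ x, 0 ≤ q x) (n : ℕ) :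
    bhattacharyya (fun s : Fin n → X => ∏ i, p (s i)) (fun s => ∏ i, q (s i)) =
      bhattacharyya p q ^ n := by
  rw [bhattacharyya, bhattacharyya, Fintype.sum_pow]
  refine sum_congr rfl fun s _ => ?_
  rw [← prod_mul_distrib, Real.sqrt_prod _ fun i _ => mul_nonneg (hp (s i)) (hq (s i))]

lemma IsDist.pi {p : X → ℝ} (hp : IsDist p) (n : ℕ) :
    IsDist fun s : Fin n → X => ∏ i, p (s i) :=
  ⟨fun s => prod_nonneg fun i _ => hp.1 (s i), by rw [← Fintype.sum_pow, hp.2, one_pow]⟩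

lemma sq_sum_abs_pi_sub_le {p q : X → ℝ} (hp : IsDist p) (hq : IsDist q) (n : ℕ) {β : ℝ}
    (hβ : 1 - β ≤ bhattacharyya p q) :
    (∑ s : Fin n → X, |∏ i, p (s i) - ∏ i, q (s i)|) ^ 2 ≤ 8 * n * β := by
  have hB := bhattacharyya_nonneg p q
  have hbern := one_add_mul_sub_le_pow (by linarith : -1 ≤ bhattacharyya p q) (2 * n)
  calc _ ≤ 4 * (1 - bhattacharyya p q ^ (2 * n)) := by
        simpa only [bhattacharyya_pi hp.1 hq.1, ← pow_mul, mul_comm n] using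
          sq_sum_abs_sub_le (hp.pi n) (hq.pi n)
    _ ≤ 8 * n * β := by push_cast at hbern; nlinarith

end Iid

lemma add_sub_two_mul_sqrt_mul_le {a b : ℝ} (ha : 0 < a) (hb : 0 ≤ b) :
    a + b - 2 * √(a * b) ≤ (a - b) ^ 2 / a := by
  have hs := Real.sq_sqrt ha.le
  have ht := Real.sq_sqrt hb
  rw [Real.sqrt_mul ha.le, le_div_iff₀ ha]
  -- with `a = s²`, `b = t²` this is `(s - t)² s² ≤ (s - t)² (s + t)²`
  nlinarith [mul_nonneg (mul_nonneg (sq_nonneg (√a - √b)) (Real.sqrt_nonneg b))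
    (add_nonneg (mul_nonneg zero_le_two (Real.sqrt_nonneg a)) (Real.sqrt_nonneg b))]

lemma renyiEntropy_natCast_succ {X : Type*} [Fintype X] (b : ℕ) (p : X → ℝ) :
    renyiEntropy ((b + 1 : ℕ) : ℝ) p = -Real.log (∑ x, p x ^ (b + 1)) / b := by
  simp only [renyiEntropy, Real.rpow_natCast]
  push_cast
  rw [show (1 : ℝ) - (b + 1) = -b by ring, one_div, inv_neg]
  ring

lemma le_renyiEntropy_sub {X : Type*} [Fintype X] {b : ℕ} {p q : X → ℝ} {η : ℝ}
    (h0 : 0 ≤ η) (h2 : η ≤ 2) (hp : 0 < ∑ x, p x ^ (b + 1))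
    (hpq : (1 + η) * ∑ x, p x ^ (b + 1) ≤ ∑ x, q x ^ (b + 1)) :
    η / (2 * b) ≤ renyiEntropy ((b + 1 : ℕ) : ℝ) p - renyiEntropy ((b + 1 : ℕ) : ℝ) q := by
  have hq : 0 < ∑ x, q x ^ (b + 1) := lt_of_lt_of_le (by positivity) hpq
  have hlog : Real.log (1 + η) ≤
      Real.log (∑ x, q x ^ (b + 1)) - Real.log (∑ x, p x ^ (b + 1)) := by
    rw [← Real.log_div hq.ne' hp.ne']
    exact Real.log_le_log (by positivity) ((le_div_iff₀ hp).2 hpq)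
  rw [renyiEntropy_natCast_succ, renyiEntropy_natCast_succ, ← sub_div, ← div_div]
  gcongr
  have hhalf : η / 2 ≤ 2 * η / (η + 2) := by
    rw [div_le_div_iff₀ two_pos (by linarith)]
    nlinarith
  linarith [Real.le_log_one_add_of_nonneg h0]

section Spike

variable {m : ℕ}

noncomputable def spike (m : ℕ) (μ : ℝ) : Fin (m + 1) → ℝ :=
  Fin.cons μ fun _ => (1 - μ) / m

lemma sum_comp_spike (g : ℝ → ℝ) (μ : ℝ) :
    ∑ x, g (spike m μ x) = g μ + m * g ((1 - μ) / m) := by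
  simp [spike, Fin.sum_univ_succ]

lemma isDist_spike (hm : m ≠ 0) {μ : ℝ} (h0 : 0 ≤ μ) (h1 : μ ≤ 1) : IsDist (spike m μ) := by
  refine ⟨Fin.cases h0 fun _ => by simp only [spike, Fin.cons_succ]; positivity, ?_⟩
  have hsum := sum_comp_spike id μ (m := m)
  simp only [id] at hsum
  rw [hsum, mul_div_cancel₀ _ (by exact_mod_cast hm : (m : ℝ) ≠ 0), add_sub_cancel]

lemma sum_spike_pow (hm : m ≠ 0) (μ : ℝ) (b : ℕ) :
    ∑ x, spike m μ x ^ (b + 1) = μ ^ (b + 1) + (1 - μ) ^ (b + 1) / m ^ b := by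
  rw [sum_comp_spike (· ^ (b + 1)), div_pow, pow_succ (m : ℝ), ← div_div,
    mul_div_cancel₀ _ (by exact_mod_cast hm : (m : ℝ) ≠ 0)]

lemma bhattacharyya_spike (hm : m ≠ 0) (μ ν : ℝ) :
    bhattacharyya (spike m μ) (spike m ν) = √(μ * ν) + √((1 - μ) * (1 - ν)) := by
  have : (m : ℝ) ≠ 0 := by exact_mod_cast hm
  simp only [bhattacharyya, spike, Fin.sum_univ_succ, Fin.cons_zero, Fin.cons_succ, sum_const,
    card_univ, Fintype.card_fin, nsmul_eq_mul]
  rw [div_mul_div_comm, Real.sqrt_div' _ (by positivity), Real.sqrt_mul_self (by positivity),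
    mul_div_cancel₀ _ this]

end Spike

section SpikeEstimates

variable {m b : ℕ} {μ θ : ℝ}

lemma sum_spike_pow_le (hm : 1 ≤ m) (h0 : 0 ≤ μ) (h1 : μ ≤ 1)
    (hμ : 1 ≤ μ ^ (b + 1) * ((m : ℝ) + 1) ^ b) :
    ∑ x, spike m μ x ^ (b + 1) ≤ (1 + 2 ^ b) * μ ^ (b + 1) := by
  have hm' : (1 : ℝ) ≤ m := by exact_mod_cast hm
  have htail : (1 - μ) ^ (b + 1) / (m : ℝ) ^ b ≤ 2 ^ b * μ ^ (b + 1) := by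
    rw [div_le_iff₀ (by positivity)]
    calc (1 - μ) ^ (b + 1) ≤ 1 := pow_le_one₀ (by linarith) (by linarith)
      _ ≤ μ ^ (b + 1) * ((m : ℝ) + 1) ^ b := hμ
      _ ≤ μ ^ (b + 1) * (2 * m) ^ b := by gcongr; linarith
      _ = 2 ^ b * μ ^ (b + 1) * (m : ℝ) ^ b := by ring
  rw [sum_spike_pow (by omega)]
  linarith

lemma sum_spike_pow_add_le (hb : 1 ≤ b) (hm : m ≠ 0) (h0 : 0 ≤ μ) (hθ : 0 ≤ θ)
    (hν : μ * (1 + θ) ≤ 1) (hμm : b + 1 ≤ μ * m) :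
    ∑ x, spike m μ x ^ (b + 1) + θ * μ ^ (b + 1) ≤ ∑ x, spike m (μ * (1 + θ)) x ^ (b + 1) := by
  have hb' : (1 : ℝ) ≤ b := by exact_mod_cast hb
  have hm' : (0 : ℝ) < m := by positivity
  have hhead : μ ^ (b + 1) + 2 * θ * μ ^ (b + 1) ≤ (μ * (1 + θ)) ^ (b + 1) := by
    have := one_add_mul_le_pow (by linarith : -2 ≤ θ) (b + 1)
    have hpow : 1 + 2 * θ ≤ (1 + θ) ^ (b + 1) := by push_cast at this; nlinarith
    rw [mul_pow]
    nlinarith [mul_le_mul_of_nonneg_left hpow (pow_nonneg h0 (b + 1))]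
  have htail : (1 - μ) ^ (b + 1) - (1 - μ * (1 + θ)) ^ (b + 1) ≤ (b + 1) * (μ * θ) := by
    have hmax : max |1 - μ| |1 - μ * (1 + θ)| ≤ 1 :=
      max_le (abs_le.2 ⟨by nlinarith, by linarith⟩) (abs_le.2 ⟨by linarith, by nlinarith⟩)
    refine (le_abs_self _).trans ((abs_pow_sub_pow_le _ _ _).trans ?_)
    calc |1 - μ - (1 - μ * (1 + θ))| * ↑(b + 1) * max |1 - μ| |1 - μ * (1 + θ)| ^ b
        ≤ |1 - μ - (1 - μ * (1 + θ))| * ↑(b + 1) * 1 := by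
          gcongr
          exact pow_le_one₀ (by positivity) hmax
      _ = (b + 1) * (μ * θ) := by
        rw [show 1 - μ - (1 - μ * (1 + θ)) = μ * θ by ring, abs_of_nonneg (by positivity)]
        push_cast; ring
  have hgrowth : (b + 1) * (μ * θ) ≤ θ * μ ^ (b + 1) * (m : ℝ) ^ b := by
    calc (b + 1) * (μ * θ) ≤ (μ * m) ^ b * (μ * θ) := by
          gcongr
          exact hμm.trans (le_self_pow₀ (by linarith) (by omega))
      _ = θ * μ ^ (b + 1) * (m : ℝ) ^ b := by ring
  rw [sum_spike_pow hm, sum_spike_pow hm]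
  have := div_le_of_le_mul₀ (by positivity) (by positivity) (htail.trans hgrowth)
  rw [sub_div] at this
  linarith

lemma renyiEntropy_spike_sub_ge (hb : 1 ≤ b) (hm : 1 ≤ m) (h0 : 0 < μ) (hθ0 : 0 ≤ θ)
    (hθ1 : θ ≤ 1) (hν : μ * (1 + θ) ≤ 1) (hμm : b + 1 ≤ μ * m)
    (hμ : 1 ≤ μ ^ (b + 1) * ((m : ℝ) + 1) ^ b) :
    θ / (2 * (1 + 2 ^ b) * b) ≤ renyiEntropy ((b + 1 : ℕ) : ℝ) (spike m μ) -
      renyiEntropy ((b + 1 : ℕ) : ℝ) (spike m (μ * (1 + θ))) := by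
  have hC : (1 : ℝ) ≤ 1 + 2 ^ b := by linarith [pow_pos (two_pos (α := ℝ)) b]
  have hμ1 : μ ≤ 1 := by nlinarith
  have hupper := sum_spike_pow_le hm h0.le hμ1 hμ
  have hgap := sum_spike_pow_add_le hb (by omega) h0.le hθ0 hν hμm
  have hpos : 0 < ∑ x, spike m μ x ^ (b + 1) := by
    rw [sum_spike_pow (by omega)]
    have : (0 : ℝ) ≤ (1 - μ) ^ (b + 1) / (m : ℝ) ^ b :=
      div_nonneg (pow_nonneg (by linarith) _) (by positivity)
    positivity
  rw [show θ / (2 * (1 + 2 ^ b) * b) = θ / (1 + 2 ^ b) / (2 * b) by rw [div_div]; ring]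
  have hη : θ / (1 + 2 ^ b) ≤ 2 := ((div_le_one (by positivity)).2 (hθ1.trans hC)).trans one_le_two
  refine le_renyiEntropy_sub (by positivity) hη hpos ?_
  have : θ / (1 + 2 ^ b) * ∑ x, spike m μ x ^ (b + 1) ≤ θ * μ ^ (b + 1) := by
    rw [div_mul_eq_mul_div, div_le_iff₀ (by positivity)]
    nlinarith
  linarith

lemma one_sub_sq_div_le_bhattacharyya_spike (hm : m ≠ 0) {ν : ℝ} (hμ0 : 0 < μ)
    (hμ1 : μ ≤ 1 / 2) (hν0 : 0 ≤ ν) (hν1 : ν ≤ 1) :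
    1 - (ν - μ) ^ 2 / μ ≤ bhattacharyya (spike m μ) (spike m ν) := by
  have hhead := add_sub_two_mul_sqrt_mul_le hμ0 hν0
  have htail := add_sub_two_mul_sqrt_mul_le (by linarith : 0 < 1 - μ) (by linarith : 0 ≤ 1 - ν)
  have hcmp : (ν - μ) ^ 2 / (1 - μ) ≤ (ν - μ) ^ 2 / μ :=
    div_le_div_of_nonneg_left (sq_nonneg _) hμ0 (by linarith)
  rw [bhattacharyya_spike hm]
  rw [show (1 - μ - (1 - ν)) ^ 2 = (ν - μ) ^ 2 by ring] at htail
  rw [show (μ - ν) ^ 2 = (ν - μ) ^ 2 by ring] at hhead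
  linarith

lemma spike_mass_bounds (hb : 1 ≤ b) (hμ0 : 0 < μ)
    (hμ : μ ^ (b + 1) * ((m : ℝ) + 1) ^ b = 1)
    (hk : (2 * ((b : ℝ) + 1)) ^ (b + 1) ≤ (m : ℝ) + 1) :
    μ ≤ 1 / 4 ∧ b + 1 ≤ μ * m := by
  have hb' : (1 : ℝ) ≤ b := by exact_mod_cast hb
  have hmass : 2 * ((b : ℝ) + 1) ≤ μ * (m + 1) := by
    refine (pow_le_pow_iff_left₀ (by positivity) (by positivity) (by omega : b + 1 ≠ 0)).1 ?_
    rw [mul_pow μ, pow_succ ((m : ℝ) + 1), ← mul_assoc, hμ, one_mul]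
    exact hk
  have hμ4 : μ ≤ 1 / 4 := by
    have : μ * (μ * (m + 1)) ≤ 1 := by
      calc μ * (μ * (m + 1)) ≤ μ * (μ * (m + 1)) ^ b :=
            mul_le_mul_of_nonneg_left (le_self_pow₀ (by linarith) (by omega)) hμ0.le
        _ = 1 := by rw [mul_pow, ← mul_assoc, ← pow_succ', hμ]
    nlinarith
  exact ⟨hμ4, by nlinarith⟩

lemma exists_spike_estimate_fails {n : ℕ} {δ ε : ℝ} (hb : 1 ≤ b) (hμ0 : 0 < μ)
    (hμ : μ ^ (b + 1) * ((m : ℝ) + 1) ^ b = 1)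
    (hk : (2 * ((b : ℝ) + 1)) ^ (b + 1) ≤ (m : ℝ) + 1) (hθ0 : 0 ≤ θ) (hθ1 : θ ≤ 1)
    (hδθ : 4 * (1 + 2 ^ b) * b * δ < θ) (hε : ε ≤ 1 / 2)
    (hn : 8 * n * (μ * θ ^ 2) ≤ (1 - 2 * ε) ^ 2) (f : (Fin n → Fin (m + 1)) → ℝ) :
    ∃ p : Fin (m + 1) → ℝ, IsDist p ∧
      ε ≤ probEvent p (fun s => δ < |renyiEntropy ((b + 1 : ℕ) : ℝ) p - f s|) := by
  obtain ⟨hμ4, hμm⟩ := spike_mass_bounds hb hμ0 hμ hk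
  have hm : m ≠ 0 := by
    rintro rfl
    rw [Nat.cast_zero, mul_zero] at hμm
    linarith [b.cast_nonneg (α := ℝ)]
  have hν : μ * (1 + θ) ≤ 1 := by nlinarith
  have hP := isDist_spike hm hμ0.le (by linarith)
  have hQ := isDist_spike hm (by positivity) hν
  have hgap : 2 * δ < renyiEntropy ((b + 1 : ℕ) : ℝ) (spike m μ) -
      renyiEntropy ((b + 1 : ℕ) : ℝ) (spike m (μ * (1 + θ))) := by
    refine lt_of_lt_of_le ?_
      (renyiEntropy_spike_sub_ge hb (by omega) hμ0 hθ0 hθ1 hν hμm hμ.ge)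
    rw [lt_div_iff₀ (by positivity)]
    linarith
  have htv : ∑ s : Fin n → Fin (m + 1),
      |∏ i, spike m μ (s i) - ∏ i, spike m (μ * (1 + θ)) (s i)| ≤ 1 - 2 * ε := by
    have hB := one_sub_sq_div_le_bhattacharyya_spike hm hμ0 (by linarith) (by positivity) hν
    rw [show (μ * (1 + θ) - μ) ^ 2 / μ = μ * θ ^ 2 by field_simp; ring] at hB
    exact (pow_le_pow_iff_left₀ (by positivity) (by linarith) two_ne_zero).1
      ((sq_sum_abs_pi_sub_le hP hQ n hB).trans hn)
  rcases le_cam_two_point hP.2 hQ.1 f hgap htv with h | h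
  exacts [⟨_, hP, h⟩, ⟨_, hQ, h⟩]

end SpikeEstimates

lemma inv_rpow_pow_mul_pow (b : ℕ) {k : ℝ} (hk : 0 < k) :
    ((k ^ ((((b + 1 : ℕ) : ℝ) - 1) / ((b + 1 : ℕ) : ℝ)))⁻¹) ^ (b + 1) * k ^ b = 1 := by
  rw [inv_pow, ← Real.rpow_natCast _ (b + 1), ← Real.rpow_mul hk.le,
    div_mul_cancel₀ _ (by positivity), ← Real.rpow_natCast k b]
  push_cast
  rw [add_sub_cancel_right, inv_mul_cancel₀ (by positivity)]

theorem renyi_lower_bound_integral_general (α : ℕ) (hα : 1 < α)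
    (ε : ℝ) (hε1 : ε < 1 / 2) :
    ∃ c > (0 : ℝ), ∃ δ₀ > (0 : ℝ), ∀ δ : ℝ, 0 < δ → δ < δ₀ → ∃ K : ℕ, ∀ k : ℕ, K ≤ k →
      ∀ n : ℕ, (n : ℝ) ≤ c * (k : ℝ) ^ (((α : ℝ) - 1) / α) / δ ^ 2 →
        ∀ f : (Fin n → Fin k) → ℝ,
          ∃ p : Fin k → ℝ, IsDist p ∧
            ε ≤ probEvent p (fun s => δ < |renyiEntropy α p - f s|) := by
  obtain ⟨b, rfl⟩ : ∃ b, α = b + 1 := ⟨α - 1, by omega⟩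
  have hb : (0 : ℝ) < b := by exact_mod_cast (by omega : 0 < b)
  set C : ℝ := 1 + 2 ^ b
  have hC : 0 < C := by positivity
  set c : ℝ := (1 - 2 * ε) ^ 2 / (200 * C ^ 2 * b ^ 2)
  refine ⟨c, div_pos (by nlinarith) (by positivity), 1 / (5 * C * b), by positivity,
    fun δ hδ hδ₀ => ⟨(2 * (b + 1)) ^ (b + 1), fun k hk n hn f => ?_⟩⟩
  obtain ⟨m, rfl⟩ : ∃ m, k = m + 1 :=
    ⟨k - 1, by have := (le_self_pow₀ (by omega : 1 ≤ 2 * (b + 1)) (by omega)).trans hk; omega⟩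
  -- `R⁻¹ = k^{-(α-1)/α}` is the spike mass
  set R : ℝ := ((m + 1 : ℕ) : ℝ) ^ ((((b + 1 : ℕ) : ℝ) - 1) / ((b + 1 : ℕ) : ℝ))
  have hR : 0 < R := by positivity
  have hnμ : n * R⁻¹ ≤ c / δ ^ 2 := by
    rw [← div_eq_mul_inv, div_le_iff₀ hR]
    exact hn.trans_eq (by ring)
  refine exists_spike_estimate_fails (θ := 5 * C * b * δ) (by omega) (inv_pos.2 hR)
    (by rw [← Nat.cast_succ]; exact inv_rpow_pow_mul_pow b (by positivity))
    (by exact_mod_cast hk) (by positivity) ?_ ?_ hε1.le ?_ f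
  · have := (lt_div_iff₀ (by positivity)).1 hδ₀
    linarith
  · show 4 * C * b * δ < 5 * C * b * δ
    nlinarith [mul_pos (mul_pos hC hb) hδ]
  · calc 8 * n * (R⁻¹ * (5 * C * b * δ) ^ 2) = 200 * C ^ 2 * b ^ 2 * δ ^ 2 * (n * R⁻¹) := by
          ring
      _ ≤ 200 * C ^ 2 * b ^ 2 * δ ^ 2 * (c / δ ^ 2) := by gcongr
      _ = (1 - 2 * ε) ^ 2 := by simp only [c]; field_simp

/-- **Lower bound for integral `α > 1`.**  For every integer `α > 1` and `0 < ε < 1/2`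
there are constants `c > 0` and `δ₀ > 0` (depending on `α`, `ε`) such that for every
`0 < δ < δ₀` and all sufficiently large `k`: any estimator using `n ≤ c k^{(α-1)/α}/δ²`
samples fails, on some distribution over `k` symbols, to estimate the order-`α` Rényi
entropy to within `δ` with probability at least `ε`:
`S_α(k, δ, ε) = Ω(k^{(α-1)/α}/δ²)`. -/
theorem renyi_lower_bound_integral (α : ℕ) (hα : 1 < α)
    (ε : ℝ) (hε0 : 0 < ε) (hε1 : ε < 1 / 2) :
    ∃ c > (0 : ℝ), ∃ δ₀ > (0 : ℝ), ∀ δ : ℝ, 0 < δ → δ < δ₀ → ∃ K : ℕ, ∀ k : ℕ, K ≤ k →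
      ∀ n : ℕ, (n : ℝ) ≤ c * (k : ℝ) ^ (((α : ℝ) - 1) / α) / δ ^ 2 →
        ∀ f : (Fin n → Fin k) → ℝ,
          ∃ p : Fin k → ℝ, IsDist p ∧
            ε ≤ probEvent p (fun s => δ < |renyiEntropy α p - f s|) :=
  renyi_lower_bound_integral_general α hα ε hε1
end
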